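/- Single noisy projected Newton step at a fixed frequency: let X and Y be real Hilbert spaces and F : X → Y twice continuously Fréchet differentiable with ‖F'(x)‖ ≤ d₁ and ‖F''(x)‖ ≤ d₃ for all x ∈ X. Let X' ⊆ X be a closed subspace with orthogonal projection P, let r̃ ∈ X' satisfy F(r̃) = 0, and let σ ≥ 0 satisfy ‖F'(r̃)x‖ ≥ σ‖x‖ for all x ∈ X. Let α > 0, let f ∈ Y with ‖f‖ ≤ δ̃, let r ∈ X', and define r⁺ := r − P R_α(F'(r)) (F(r) + f). Then ‖r̃ − r⁺‖ ≤ δ̃/(2√α) + (α/(α + σ²)) ‖r̃ − r‖ + (9d₁d₃/(4α) + d₃/(4√α)) ‖r̃ − r‖². -/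

import Mathlib

/-!
Write `A = F'(r)`, `T = αI + A*A` and `e = r̃ - r`. Since `T⁻¹A*A e = e - αT⁻¹e` and `P e = e`,
the error after the step is `αP T⁻¹e + P T⁻¹A*(F r + A e + f)`. Second-order Taylor gives
`‖F r + A e‖ ≤ d₃‖e‖²/2`, and `‖T⁻¹A*‖ ≤ 1/(2√α)` handles it together with the noise. For
`u = T⁻¹e` one has `α‖u‖² + ‖A u‖² = ⟪e, u⟫`, and the lower bound `σ‖u‖ ≤ ‖F'(r̃)u‖` transfers to
`A` up to the Lipschitz error `d₃‖e‖` of `F'`; this yields the linear contraction `α/(α + σ²)`.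
-/

open scoped RealInnerProductSpace
open ContinuousLinearMap

section Orthogonal

variable {𝕜 E : Type*} [RCLike 𝕜] [NormedAddCommGroup E] [InnerProductSpace 𝕜 E]
  {K : Submodule 𝕜 E} {x p : E}

theorem Submodule.norm_le_of_mem_of_sub_mem_orthogonal (hp : p ∈ K) (hxp : x - p ∈ Kᗮ) :
    ‖p‖ ≤ ‖x‖ := by
  have hx : ‖x‖ * ‖x‖ = ‖p‖ * ‖p‖ + ‖x - p‖ * ‖x - p‖ := by
    simpa using norm_add_sq_eq_norm_sq_add_norm_sq_of_inner_eq_zero p (x - p)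
      (K.inner_right_of_mem_orthogonal hp hxp)
  nlinarith [norm_nonneg x, norm_nonneg p, mul_self_nonneg ‖x - p‖]

theorem Submodule.eq_of_mem_of_sub_mem_orthogonal (hx : x ∈ K) (hp : p ∈ K) (hxp : x - p ∈ Kᗮ) :
    p = x :=
  (sub_eq_zero.mp (Submodule.disjoint_def.mp K.orthogonal_disjoint _ (K.sub_mem hx hp) hxp)).symm

end Orthogonal

section Taylor

variable {E G : Type*} [NormedAddCommGroup E] [NormedSpace ℝ E] [NormedAddCommGroup G]
  [NormedSpace ℝ G]

theorem norm_sub_sub_fderiv_le_of_lipschitz_fderiv {f : E → G} (hf : Differentiable ℝ f) {C : ℝ}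
    (hC : ∀ x y, ‖fderiv ℝ f x - fderiv ℝ f y‖ ≤ C * ‖x - y‖) (a b : E) :
    ‖f b - f a - fderiv ℝ f a (b - a)‖ ≤ C / 2 * ‖b - a‖ ^ 2 := by
  set e := b - a
  set φ : ℝ → G := fun t => f (a + t • e) - t • fderiv ℝ f a e - f a
  have hφ : ∀ t, HasDerivAt φ (fderiv ℝ f (a + t • e) e - fderiv ℝ f a e) t := by
    intro t
    have hline : HasDerivAt (fun t : ℝ => a + t • e) e t := by
      simpa using ((hasDerivAt_id t).smul_const e).const_add a
    have hlin : HasDerivAt (fun t : ℝ => t • fderiv ℝ f a e) (fderiv ℝ f a e) t := by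
      simpa using (hasDerivAt_id t).smul_const (fderiv ℝ f a e)
    exact (((hf _).hasFDerivAt.comp_hasDerivAt t hline).sub hlin).sub_const (f a)
  -- `‖φ‖` is dominated by the solution `C‖e‖²t²/2` of the comparison problem `B' = C‖e‖²t`.
  have hbound : ∀ t ∈ Set.Icc (0 : ℝ) 1, ‖φ t‖ ≤ C * ‖e‖ ^ 2 / 2 * t ^ 2 := by
    refine image_norm_le_of_norm_deriv_right_le_deriv_boundary
      (B' := fun t => C * ‖e‖ ^ 2 * t) (fun t _ => (hφ t).continuousAt.continuousWithinAt)
      (fun t _ => (hφ t).hasDerivWithinAt) (by simp [φ]) (fun t => ?_) (fun t ht => ?_)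
    · exact ((hasDerivAt_pow 2 t).const_mul _).congr_deriv (by push_cast; ring)
    · calc ‖fderiv ℝ f (a + t • e) e - fderiv ℝ f a e‖
          ≤ ‖fderiv ℝ f (a + t • e) - fderiv ℝ f a‖ * ‖e‖ := by
            rw [← sub_apply]; exact le_opNorm _ _
        _ ≤ C * (t * ‖e‖) * ‖e‖ := by
            gcongr
            simpa [norm_smul, abs_of_nonneg ht.1] using hC (a + t • e) a
        _ = C * ‖e‖ ^ 2 * t := by ring
  calc ‖f b - f a - fderiv ℝ f a e‖ = ‖φ 1‖ := by
        simp only [φ, one_smul, e, add_sub_cancel, sub_right_comm]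
    _ ≤ C * ‖e‖ ^ 2 / 2 * 1 ^ 2 := hbound 1 (by simp)
    _ = C / 2 * ‖e‖ ^ 2 := by ring

theorem norm_fderiv_sub_le_of_norm_fderiv_fderiv_le {f : E → G} (hf : ContDiff ℝ 2 f) {C : ℝ}
    (hC : ∀ x, ‖fderiv ℝ (fderiv ℝ f) x‖ ≤ C) (x y : E) :
    ‖fderiv ℝ f x - fderiv ℝ f y‖ ≤ C * ‖x - y‖ :=
  convex_univ.norm_image_sub_le_of_norm_fderiv_le
    (fun z _ => (hf.fderiv_right (m := 1) le_rfl).differentiable one_ne_zero z)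
    (fun z _ => hC z) (Set.mem_univ y) (Set.mem_univ x)

end Taylor

section OperatorNorm

variable {𝕜 E G : Type*} [NontriviallyNormedField 𝕜] [SeminormedAddCommGroup E] [NormedSpace 𝕜 E]
  [SeminormedAddCommGroup G] [NormedSpace 𝕜 G]

theorem sq_norm_apply_le_of_norm_sub_le {A A₀ : E →L[𝕜] G} {d ε : ℝ} (hA : ‖A‖ ≤ d)
    (hA₀ : ‖A₀‖ ≤ d) (hAA₀ : ‖A₀ - A‖ ≤ ε) (u : E) :
    ‖A₀ u‖ ^ 2 ≤ ‖A u‖ ^ 2 + 2 * d * ε * ‖u‖ ^ 2 := by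
  have hdiff : ‖A₀ u‖ - ‖A u‖ ≤ ε * ‖u‖ :=
    calc ‖A₀ u‖ - ‖A u‖ ≤ ‖(A₀ - A) u‖ := by rw [sub_apply]; exact norm_sub_norm_le _ _
      _ ≤ ε * ‖u‖ := le_of_opNorm_le _ hAA₀ u
  have hsum : ‖A₀ u‖ + ‖A u‖ ≤ 2 * d * ‖u‖ := by
    linarith [le_of_opNorm_le A₀ hA₀ u, le_of_opNorm_le A hA u]
  have hdε : 0 ≤ d * ε := mul_nonneg ((norm_nonneg _).trans hA) ((norm_nonneg _).trans hAA₀)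
  rcases le_total ‖A₀ u‖ ‖A u‖ with hle | hle
  · nlinarith [norm_nonneg (A₀ u), sq_nonneg ‖u‖]
  · nlinarith [mul_le_mul hdiff hsum (by positivity) (by linarith)]

end OperatorNorm

section Tikhonov

variable {X Y : Type*} [NormedAddCommGroup X] [InnerProductSpace ℝ X] [CompleteSpace X]
  [NormedAddCommGroup Y] [InnerProductSpace ℝ Y] [CompleteSpace Y]

noncomputable def tikhonovOp (A : X →L[ℝ] Y) (α : ℝ) : X →L[ℝ] X := α • 1 + adjoint A ∘L A

theorem inner_tikhonovOp_self (A : X →L[ℝ] Y) (α : ℝ) (u : X) :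
    ⟪tikhonovOp A α u, u⟫ = α * ‖u‖ ^ 2 + ‖A u‖ ^ 2 := by
  simp [tikhonovOp, inner_add_left, real_inner_smul_left, adjoint_inner_left]

theorem mul_norm_le_norm_tikhonovOp (A : X →L[ℝ] Y) (α : ℝ) (u : X) :
    α * ‖u‖ ≤ ‖tikhonovOp A α u‖ := by
  have h := inner_tikhonovOp_self A α u
  have := real_inner_le_norm (tikhonovOp A α u) u
  rcases (norm_nonneg u).eq_or_lt with hu | hu
  · rw [← hu, mul_zero]; exact norm_nonneg _
  · nlinarith [sq_nonneg ‖A u‖]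

theorem two_mul_sqrt_mul_norm_le_of_tikhonovOp_eq_adjoint (A : X →L[ℝ] Y) {α : ℝ} (hα : 0 ≤ α)
    {u : X} {y : Y} (h : tikhonovOp A α u = adjoint A y) : 2 * √α * ‖u‖ ≤ ‖y‖ := by
  have hyu : α * ‖u‖ ^ 2 + ‖A u‖ ^ 2 ≤ ‖y‖ * ‖A u‖ := by
    rw [← inner_tikhonovOp_self, h, adjoint_inner_left]; exact real_inner_le_norm _ _
  have hsq : (2 * √α * ‖u‖) ^ 2 ≤ ‖y‖ ^ 2 := by
    rw [mul_pow, mul_pow, Real.sq_sqrt hα]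
    nlinarith [sq_nonneg (‖y‖ - 2 * ‖A u‖)]
  exact (pow_le_pow_iff_left₀ (by positivity) (norm_nonneg _) two_ne_zero).mp hsq

theorem mul_norm_le_of_tikhonovOp_eq {A A₀ : X →L[ℝ] Y} {α σ d ε : ℝ} (hα : 0 < α) (hσ : 0 ≤ σ)
    (hA : ‖A‖ ≤ d) (hA₀ : ‖A₀‖ ≤ d) (hAA₀ : ‖A₀ - A‖ ≤ ε) (hlow : ∀ x, σ * ‖x‖ ≤ ‖A₀ x‖)
    {u e : X} (hu : tikhonovOp A α u = e) :
    α * ‖u‖ ≤ α / (α + σ ^ 2) * ‖e‖ + 2 * d * ε / α * ‖e‖ := by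
  have hdε : 0 ≤ d * ε := mul_nonneg ((norm_nonneg _).trans hA) ((norm_nonneg _).trans hAA₀)
  have hαu : α * ‖u‖ ≤ ‖e‖ := hu ▸ mul_norm_le_norm_tikhonovOp A α u
  have hσu : σ ^ 2 * ‖u‖ ^ 2 ≤ ‖A₀ u‖ ^ 2 := by
    rw [← mul_pow]; exact pow_le_pow_left₀ (by positivity) (hlow u) 2
  have hinner : α * ‖u‖ ^ 2 + ‖A u‖ ^ 2 ≤ ‖e‖ * ‖u‖ := by
    rw [← inner_tikhonovOp_self, hu]; exact real_inner_le_norm _ _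
  have hmain : (α + σ ^ 2) * ‖u‖ ≤ ‖e‖ + 2 * d * ε * ‖u‖ := by
    rcases (norm_nonneg u).eq_or_lt with h0 | hpos
    · rw [← h0]; nlinarith [norm_nonneg e]
    · have := sq_norm_apply_le_of_norm_sub_le hA hA₀ hAA₀ u
      nlinarith
  have hασ : 0 < α + σ ^ 2 := by positivity
  have hε : 2 * d * ε * ‖u‖ ≤ 2 * d * ε * ‖e‖ / α := by
    rw [le_div_iff₀ hα]; nlinarith
  calc α * ‖u‖ = α / (α + σ ^ 2) * ((α + σ ^ 2) * ‖u‖) := by field_simp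
    _ ≤ α / (α + σ ^ 2) * (‖e‖ + 2 * d * ε * ‖e‖ / α) := by gcongr; linarith
    _ = α / (α + σ ^ 2) * ‖e‖ + 2 * d * ε / (α + σ ^ 2) * ‖e‖ := by field_simp
    _ ≤ α / (α + σ ^ 2) * ‖e‖ + 2 * d * ε / α * ‖e‖ := by
      have : 2 * d * ε / (α + σ ^ 2) ≤ 2 * d * ε / α :=
        div_le_div_of_nonneg_left (by linarith) hα (by nlinarith)
      gcongr

theorem tikhonov_step_error_eq {A : X →L[ℝ] Y} {α : ℝ} {B : X →L[ℝ] X}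
    (hB : ∀ z, B (tikhonovOp A α z) = z) (P : X →L[ℝ] X) {e : X} (hPe : P e = e) (g : Y) :
    e + P (B (adjoint A g)) = α • P (B e) + P (B (adjoint A (g + A e))) := by
  have hBAA : B (adjoint A (A e)) = e - α • B e := by
    have h := hB e
    simp only [tikhonovOp, add_apply, smul_apply, one_apply_eq_self, comp_apply, map_add,
      map_smul] at h
    exact eq_sub_of_add_eq' h
  rw [map_add, map_add, hBAA, map_add, map_sub, map_smul, hPe]
  abel

theorem norm_tikhonov_step_error_le {A A₀ : X →L[ℝ] Y} {α σ d ε : ℝ} (hα : 0 < α) (hσ : 0 ≤ σ)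
    (hA : ‖A‖ ≤ d) (hA₀ : ‖A₀‖ ≤ d) (hAA₀ : ‖A₀ - A‖ ≤ ε) (hlow : ∀ x, σ * ‖x‖ ≤ ‖A₀ x‖)
    {B : X →L[ℝ] X} (hBT : ∀ z, B (tikhonovOp A α z) = z) (hTB : ∀ z, tikhonovOp A α (B z) = z)
    {P : X →L[ℝ] X} (hP : ∀ x, ‖P x‖ ≤ ‖x‖) {e : X} (hPe : P e = e) (g : Y) :
    ‖e + P (B (adjoint A g))‖ ≤
      α / (α + σ ^ 2) * ‖e‖ + 2 * d * ε / α * ‖e‖ + ‖g + A e‖ / (2 * √α) := by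
  rw [tikhonov_step_error_eq hBT P hPe]
  have hlinear := mul_norm_le_of_tikhonovOp_eq hα hσ hA hA₀ hAA₀ hlow (hTB e)
  have hresidual : 2 * √α * ‖B (adjoint A (g + A e))‖ ≤ ‖g + A e‖ :=
    two_mul_sqrt_mul_norm_le_of_tikhonovOp_eq_adjoint A hα.le (hTB _)
  have hsmul : ‖α • P (B e)‖ ≤ α * ‖B e‖ := by
    rw [norm_smul, Real.norm_of_nonneg hα.le]
    exact mul_le_mul_of_nonneg_left (hP _) hα.le
  calc _ ≤ α * ‖B e‖ + ‖B (adjoint A (g + A e))‖ :=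
        (norm_add_le _ _).trans (add_le_add hsmul (hP _))
    _ ≤ _ := by
        gcongr
        rw [le_div_iff₀ (by positivity), mul_comm]
        exact hresidual

end Tikhonov

theorem stmt_11_general {X Y : Type*}
    [NormedAddCommGroup X] [InnerProductSpace ℝ X] [CompleteSpace X]
    [NormedAddCommGroup Y] [InnerProductSpace ℝ Y] [CompleteSpace Y]
    (F : X → Y) (hF : ContDiff ℝ 2 F)
    (d₁ d₃ : ℝ)
    (hF' : ∀ x : X, ‖fderiv ℝ F x‖ ≤ d₁)
    (hF'' : ∀ x : X, ‖fderiv ℝ (fderiv ℝ F) x‖ ≤ d₃)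
    (X' : Submodule ℝ X)
    (P : X →L[ℝ] X) (hP : ∀ x : X, P x ∈ X' ∧ x - P x ∈ X'ᗮ)
    (rt : X) (hrtmem : rt ∈ X') (hrt : F rt = 0)
    (σ : ℝ) (hσ : 0 ≤ σ) (hlow : ∀ x : X, σ * ‖x‖ ≤ ‖fderiv ℝ F rt x‖)
    (α : ℝ) (hα : 0 < α)
    (δt : ℝ) (f : Y) (hf : ‖f‖ ≤ δt)
    (r : X) (hrmem : r ∈ X')
    (B : X →L[ℝ] X)
    (hB₁ : B ∘L (α • (1 : X →L[ℝ] X) +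
      ContinuousLinearMap.adjoint (fderiv ℝ F r) ∘L fderiv ℝ F r) = 1)
    (hB₂ : (α • (1 : X →L[ℝ] X) +
      ContinuousLinearMap.adjoint (fderiv ℝ F r) ∘L fderiv ℝ F r) ∘L B = 1)
    (rplus : X)
    (hrplus : rplus =
      r - P ((B ∘L ContinuousLinearMap.adjoint (fderiv ℝ F r)) (F r + f))) :
    ‖rt - rplus‖ ≤ δt / (2 * Real.sqrt α) + α / (α + σ ^ 2) * ‖rt - r‖ +
      (9 * d₁ * d₃ / (4 * α) + d₃ / (4 * Real.sqrt α)) * ‖rt - r‖ ^ 2 := by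
  set A := fderiv ℝ F r
  set e := rt - r
  have hlip := norm_fderiv_sub_le_of_norm_fderiv_fderiv_le hF hF''
  have hPe : P e = e :=
    X'.eq_of_mem_of_sub_mem_orthogonal (X'.sub_mem hrtmem hrmem) (hP e).1 (hP e).2
  have hstep := norm_tikhonov_step_error_le hα hσ (hF' r) (hF' rt) (hlip rt r) hlow
    (DFunLike.congr_fun hB₁) (DFunLike.congr_fun hB₂)
    (fun x => X'.norm_le_of_mem_of_sub_mem_orthogonal (hP x).1 (hP x).2) hPe (F r + f)
  have htaylor : ‖F r + A e‖ ≤ d₃ / 2 * ‖e‖ ^ 2 := by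
    have h := norm_sub_sub_fderiv_le_of_lipschitz_fderiv (hF.differentiable two_ne_zero) hlip r rt
    rwa [hrt, zero_sub, sub_eq_add_neg, ← neg_add, norm_neg] at h
  have hresidual : ‖F r + f + A e‖ ≤ δt + d₃ / 2 * ‖e‖ ^ 2 := by
    rw [add_right_comm, add_comm]
    exact (norm_add_le _ _).trans (add_le_add hf htaylor)
  have hconst : 2 * d₁ * d₃ / α ≤ 9 * d₁ * d₃ / (4 * α) := by
    have hd₁d₃ : 0 ≤ d₁ * d₃ := mul_nonneg ((norm_nonneg _).trans (hF' 0))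
      ((norm_nonneg (fderiv ℝ (fderiv ℝ F) 0)).trans (hF'' 0))
    rw [div_le_div_iff₀ hα (by positivity)]
    nlinarith [mul_nonneg hd₁d₃ hα.le]
  have hsplit : (δt + d₃ / 2 * ‖e‖ ^ 2) / (2 * √α) = δt / (2 * √α) + d₃ / (4 * √α) * ‖e‖ ^ 2 := by
    field_simp
    ring
  rw [hrplus, comp_apply, sub_sub_eq_add_sub, add_sub_right_comm]
  calc _ ≤ α / (α + σ ^ 2) * ‖e‖ + 2 * d₁ * (d₃ * ‖e‖) / α * ‖e‖
          + (δt + d₃ / 2 * ‖e‖ ^ 2) / (2 * √α) := hstep.trans (by gcongr)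
    _ = α / (α + σ ^ 2) * ‖e‖ + 2 * d₁ * d₃ / α * ‖e‖ ^ 2
          + (δt / (2 * √α) + d₃ / (4 * √α) * ‖e‖ ^ 2) := by rw [hsplit]; ring
    _ ≤ _ := by linarith [mul_le_mul_of_nonneg_right hconst (sq_nonneg ‖e‖)]

/-- Single noisy projected Newton step at a fixed frequency. -/
theorem stmt_11 {X Y : Type*}
    [NormedAddCommGroup X] [InnerProductSpace ℝ X] [CompleteSpace X]
    [NormedAddCommGroup Y] [InnerProductSpace ℝ Y] [CompleteSpace Y]
    (F : X → Y) (hF : ContDiff ℝ 2 F)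
    (d₁ d₃ : ℝ) (hd₁ : 0 < d₁) (hd₃ : 0 < d₃)
    (hF' : ∀ x : X, ‖fderiv ℝ F x‖ ≤ d₁)
    (hF'' : ∀ x : X, ‖fderiv ℝ (fderiv ℝ F) x‖ ≤ d₃)
    (X' : Submodule ℝ X) (hX' : IsClosed (X' : Set X))
    (P : X →L[ℝ] X) (hP : ∀ x : X, P x ∈ X' ∧ x - P x ∈ X'ᗮ)
    (rt : X) (hrtmem : rt ∈ X') (hrt : F rt = 0)
    (σ : ℝ) (hσ : 0 ≤ σ) (hlow : ∀ x : X, σ * ‖x‖ ≤ ‖fderiv ℝ F rt x‖)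
    (α : ℝ) (hα : 0 < α)
    (δt : ℝ) (hδt : 0 ≤ δt) (f : Y) (hf : ‖f‖ ≤ δt)
    (r : X) (hrmem : r ∈ X')
    (B : X →L[ℝ] X)
    (hB₁ : B ∘L (α • (1 : X →L[ℝ] X) +
      ContinuousLinearMap.adjoint (fderiv ℝ F r) ∘L fderiv ℝ F r) = 1)
    (hB₂ : (α • (1 : X →L[ℝ] X) +
      ContinuousLinearMap.adjoint (fderiv ℝ F r) ∘L fderiv ℝ F r) ∘L B = 1)
    (rplus : X)
    (hrplus : rplus =
      r - P ((B ∘L ContinuousLinearMap.adjoint (fderiv ℝ F r)) (F r + f))) :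
    ‖rt - rplus‖ ≤ δt / (2 * Real.sqrt α) + α / (α + σ ^ 2) * ‖rt - r‖ +
      (9 * d₁ * d₃ / (4 * α) + d₃ / (4 * Real.sqrt α)) * ‖rt - r‖ ^ 2 :=
  stmt_11_general F hF d₁ d₃ hF' hF'' X' P hP rt hrtmem hrt σ hσ hlow α hα δt f hf r hrmem B hB₁ hB₂
    rplus hrplus
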